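/- Rank characterization of conformal membership: let z_1, …, z_{n+1} be pairwise distinct real numbers and β ∈ (0,1]. Then z_{n+1} ≤ Q_β(z_1, …, z_n, +∞) if and only if #{ i ∈ {1, …, n+1} : z_i ≤ z_{n+1} } ≤ ⌈β(n+1)⌉, where the quantile is computed over the n+1 values z_1, …, z_n together with +∞. -/

import Mathlib

open MeasureTheory

/-- Empirical `β`-quantile of extended-real values `z 1, …, z m`:
`inf { x ∈ ℝ : (1/m) · #{ i : z i ≤ x } ≥ β }`, with `inf ∅ = +∞` (in `EReal`). -/
noncomputable def empQuantile {m : ℕ} (z : Fin m → EReal) (β : ℝ) : EReal :=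
  sInf ((fun r : ℝ => (r : EReal)) ''
    {r : ℝ | β ≤ ((Finset.univ.filter (fun i => z i ≤ (r : EReal))).card : ℝ) / m})

/-- The empirical `β`-quantile of the `n + 1` values `z 1, …, z n, +∞`. -/
noncomputable def augQuantile {n : ℕ} (z : Fin n → ℝ) (β : ℝ) : EReal :=
  empQuantile (Fin.snoc (fun i => ((z i : ℝ) : EReal)) ⊤) β

/-!
Write `a = z (n+1)` and `c r = #{i ≤ n : z i ≤ r}`. The value `+∞` never lies below a real
threshold, so `a ≤ Q_β` says exactly that `a ≤ r` whenever `⌈β(n+1)⌉ ≤ c r`. As `c` is monotone,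
this holds iff `c a < ⌈β(n+1)⌉`: otherwise, since `a` differs from every `z i` with `i ≤ n`, the
largest of those `z i` that lie below `a` (or any `r < a` if there are none) is a threshold `r < a`
with `c r = c a`. Finally the rank of `a` is `c a + 1`.
-/

open Finset

section Counting

variable {ι α : Type*} [Fintype ι] [LinearOrder α]

lemma card_filter_le_mono (w : ι → α) {r s : α} (hrs : r ≤ s) :
    #{i | w i ≤ r} ≤ #{i | w i ≤ s} :=
  card_le_card <| monotone_filter_right _ fun _ _ hi => hi.trans hrs

lemma exists_lt_forall_le_of_lt [NoMinOrder α] (w : ι → α) (a : α) :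
    ∃ r < a, ∀ i, w i < a → w i ≤ r := by
  by_cases h : (univ.filter fun i => w i < a).Nonempty
  · obtain ⟨j, hj, hmax⟩ := exists_max_image _ w h
    exact ⟨w j, (mem_filter.1 hj).2, fun i hi => hmax i (mem_filter.2 ⟨mem_univ _, hi⟩)⟩
  · obtain ⟨r, hr⟩ := exists_lt a
    exact ⟨r, hr, fun i hi => absurd ⟨i, mem_filter.2 ⟨mem_univ _, hi⟩⟩ h⟩

lemma forall_le_of_le_card_iff_card_lt [NoMinOrder α] {w : ι → α} {a : α}
    (ha : a ∉ Set.range w) (k : ℕ) :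
    (∀ r, k ≤ #{i | w i ≤ r} → a ≤ r) ↔ #{i | w i ≤ a} < k := by
  constructor
  · intro h
    by_contra! hka
    obtain ⟨r, hra, hr⟩ := exists_lt_forall_le_of_lt w a
    have hcard : #{i | w i ≤ a} ≤ #{i | w i ≤ r} :=
      card_le_card <| monotone_filter_right _ fun i _ hi =>
        hr i (lt_of_le_of_ne hi fun he => ha ⟨i, he⟩)
    exact (h r (hka.trans hcard)).not_gt hra
  · intro h r hr
    by_contra! hra
    exact (hr.trans (card_filter_le_mono w hra.le)).not_gt h

end Counting

lemma le_div_iff_ceil_mul_le {β : ℝ} {c m : ℕ} (hm : 0 < m) :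
    β ≤ c / m ↔ ⌈β * m⌉₊ ≤ c := by
  rw [le_div_iff₀ (by positivity), Nat.ceil_le]

lemma coe_le_empQuantile_iff {m : ℕ} (z : Fin m → EReal) (β x : ℝ) :
    (x : EReal) ≤ empQuantile z β ↔
      ∀ r : ℝ, β ≤ (#{i | z i ≤ (r : EReal)} : ℝ) / m → x ≤ r := by
  simp only [empQuantile, le_sInf_iff, Set.forall_mem_image, Set.mem_ofPred_eq,
    EReal.coe_le_coe_iff]

lemma card_filter_snoc_top_le {n : ℕ} (w : Fin n → ℝ) (r : ℝ) :
    #{i | (Fin.snoc (fun i => (w i : EReal)) ⊤ : Fin (n + 1) → EReal) i ≤ (r : EReal)} =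
      #{i | w i ≤ r} := by
  rw [card_filter, card_filter, Fin.sum_univ_castSucc]
  simp [Fin.snoc_castSucc, Fin.snoc_last]

lemma coe_le_augQuantile_iff {n : ℕ} (w : Fin n → ℝ) (β x : ℝ) :
    (x : EReal) ≤ augQuantile w β ↔ ∀ r : ℝ, ⌈β * (n + 1)⌉₊ ≤ #{i | w i ≤ r} → x ≤ r := by
  rw [augQuantile, coe_le_empQuantile_iff]
  simp_rw [card_filter_snoc_top_le, le_div_iff_ceil_mul_le n.succ_pos, Nat.cast_succ]

lemma card_filter_le_last {n : ℕ} (z : Fin (n + 1) → ℝ) :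
    #{i | z i ≤ z (Fin.last n)} = #{i : Fin n | z i.castSucc ≤ z (Fin.last n)} + 1 := by
  rw [card_filter, card_filter, Fin.sum_univ_castSucc]
  simp

theorem stmt16_general (n : ℕ) (z : Fin (n + 1) → ℝ) (hz : Function.Injective z)
    (β : ℝ) :
    ((z (Fin.last n) : ℝ) : EReal) ≤
        augQuantile (fun i : Fin n => z (Fin.castSucc i)) β ↔
      (Finset.univ.filter (fun i : Fin (n + 1) =>
          z i ≤ z (Fin.last n))).card ≤ ⌈β * (n + 1)⌉₊ := by
  have hlast : z (Fin.last n) ∉ Set.range fun i : Fin n => z i.castSucc := by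
    rintro ⟨i, hi⟩
    exact (Fin.castSucc_lt_last i).ne (hz hi)
  rw [coe_le_augQuantile_iff, forall_le_of_le_card_iff_card_lt hlast, card_filter_le_last]
  exact Nat.lt_iff_add_one_le

/-- Rank characterization of conformal membership: for pairwise distinct reals
`z 1, …, z (n+1)` and `β ∈ (0,1]`,
`z (n+1) ≤ Q_β(z_1, …, z_n, +∞)` iff the rank of `z (n+1)` among all `n + 1` values
is at most `⌈β(n+1)⌉`. -/
theorem stmt16 (n : ℕ) (z : Fin (n + 1) → ℝ) (hz : Function.Injective z)
    (β : ℝ) (hβ : β ∈ Set.Ioc (0 : ℝ) 1) :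
    ((z (Fin.last n) : ℝ) : EReal) ≤
        augQuantile (fun i : Fin n => z (Fin.castSucc i)) β ↔
      (Finset.univ.filter (fun i : Fin (n + 1) =>
          z i ≤ z (Fin.last n))).card ≤ ⌈β * (n + 1)⌉₊ :=
  stmt16_general n z hz β
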